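/- arXiv:1302.3867 — 2 statements merged into one kernel-verified Lean document; each statement's English description precedes it below -/
import Mathlib

section
/- Let r ≥ 1 and let G be a graph with a tree-cut decomposition of adhesion less than r such that every torso has at most r vertices of degree at least r. Then G does not admit a weak immersion of K_{r+1}. -/
open Sym2

/-- A finite multigraph: finite vertex and edge types, each edge has an
unordered pair of endpoints, and there are no loops. -/
structure Multigraph where
  V : Type
  E : Type
  finV : Finite V
  finE : Finite E
  ends : E → Sym2 V
  no_loops : ∀ e, ¬ (ends e).IsDiag

attribute [instance] Multigraph.finV Multigraph.finE

namespace Multigraph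

/-- `IsWalk G vs es`: `vs` is the vertex sequence and `es` the edge sequence of a
walk in `G`. -/
inductive IsWalk (G : Multigraph) : List G.V → List G.E → Prop
  | nil (v : G.V) : IsWalk G [v] []
  | cons {v : G.V} {vs : List G.V} {es : List G.E} (u : G.V) (e : G.E)
      (he : G.ends e = s(u, v)) (hw : IsWalk G (v :: vs) es) :
      IsWalk G (u :: v :: vs) (e :: es)

/-- A path from `a` to `b` in the multigraph `G`, given by its vertex sequence `vs`
and edge sequence `es`. -/
def IsPathBetween (G : Multigraph) (a b : G.V) (vs : List G.V) (es : List G.E) : Prop :=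
  G.IsWalk vs es ∧ vs.Nodup ∧ vs.head? = some a ∧ vs.getLast? = some b

/-- A weak immersion of `H` into `G`. -/
structure WeakImmersion (H G : Multigraph) where
  vmap : H.V → G.V
  vmap_inj : Function.Injective vmap
  pverts : H.E → List G.V
  pedges : H.E → List G.E
  is_path : ∀ f : H.E, ∃ x y : H.V, H.ends f = s(x, y) ∧
    G.IsPathBetween (vmap x) (vmap y) (pverts f) (pedges f)
  edge_disjoint : ∀ f f' : H.E, f ≠ f' → ∀ e, e ∈ pedges f → e ∉ pedges f'

/-- `G.Immerses H`: `G` admits a weak immersion of `H`. -/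
def Immerses (G H : Multigraph) : Prop := Nonempty (WeakImmersion H G)

/-- The degree of a vertex: the number of edges incident with it. -/
noncomputable def degree (G : Multigraph) (v : G.V) : ℕ :=
  Nat.card {e : G.E // v ∈ G.ends e}

/-- The edge cut `δ(U)`: edges with exactly one endpoint in `U`. -/
def edgeCut (G : Multigraph) (U : Set G.V) : Set G.E :=
  {e | ∃ a b, G.ends e = s(a, b) ∧ a ∈ U ∧ b ∉ U}

/-- There exist `k` pairwise edge-disjoint paths from `a` to `b` in `G`. -/
def EdgeDisjointPaths (G : Multigraph) (a b : G.V) (k : ℕ) : Prop :=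
  ∃ (vs : Fin k → List G.V) (es : Fin k → List G.E),
    (∀ i, G.IsPathBetween a b (vs i) (es i)) ∧
    ∀ i j, i ≠ j → ∀ e, e ∈ es i → e ∉ es j

/-- Isomorphism of multigraphs. -/
structure Iso (G H : Multigraph) where
  vmap : G.V ≃ H.V
  emap : G.E ≃ H.E
  ends_map : ∀ e, H.ends (emap e) = Sym2.map vmap (G.ends e)

/-- The complete graph `K_t` as a multigraph. -/
def completeGraph (t : ℕ) : Multigraph where
  V := Fin t
  E := {p : Sym2 (Fin t) // ¬ p.IsDiag}
  finV := inferInstance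
  finE := inferInstance
  ends := Subtype.val
  no_loops := fun e => e.prop

/-- The multigraph `S_{k,n}`: vertices `x_1, …, x_n, y` (with `y = none`) and `k`
parallel edges from each `x_i` to `y`. -/
def star (k n : ℕ) : Multigraph where
  V := Option (Fin n)
  E := Fin n × Fin k
  finV := inferInstance
  finE := inferInstance
  ends := fun p => s(some p.1, none)
  no_loops := fun p => by simp [Sym2.mk_isDiag_iff]

/-! ### Edge sums -/

/-- A witness that `G` is a `k`-edge sum of `G₁` and `G₂`. -/
structure EdgeSumWitness (k : ℕ) (G G₁ G₂ : Multigraph) where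
  v₁ : G₁.V
  v₂ : G₂.V
  deg₁ : G₁.degree v₁ = k
  deg₂ : G₂.degree v₂ = k
  π : {e : G₁.E // v₁ ∈ G₁.ends e} ≃ {e : G₂.E // v₂ ∈ G₂.ends e}
  α : G.V ≃ {x : G₁.V // x ≠ v₁} ⊕ {y : G₂.V // y ≠ v₂}
  β : G.E ≃ ({e : G₁.E // v₁ ∉ G₁.ends e} ⊕ {e : G₂.E // v₂ ∉ G₂.ends e}) ⊕
      {e : G₁.E // v₁ ∈ G₁.ends e}
  ends₁ : ∀ (e : {e : G₁.E // v₁ ∉ G₁.ends e}) (x y : G₁.V) (hx : x ≠ v₁) (hy : y ≠ v₁),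
    G₁.ends e.val = s(x, y) →
      G.ends (β.symm (Sum.inl (Sum.inl e))) = s(α.symm (Sum.inl ⟨x, hx⟩), α.symm (Sum.inl ⟨y, hy⟩))
  ends₂ : ∀ (e : {e : G₂.E // v₂ ∉ G₂.ends e}) (x y : G₂.V) (hx : x ≠ v₂) (hy : y ≠ v₂),
    G₂.ends e.val = s(x, y) →
      G.ends (β.symm (Sum.inl (Sum.inr e))) = s(α.symm (Sum.inr ⟨x, hx⟩), α.symm (Sum.inr ⟨y, hy⟩))
  ends₃ : ∀ (e : {e : G₁.E // v₁ ∈ G₁.ends e}) (x : G₁.V) (y : G₂.V) (hx : x ≠ v₁) (hy : y ≠ v₂),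
    G₁.ends e.val = s(x, v₁) → G₂.ends (π e).val = s(y, v₂) →
      G.ends (β.symm (Sum.inr e)) = s(α.symm (Sum.inl ⟨x, hx⟩), α.symm (Sum.inr ⟨y, hy⟩))

/-- `G` is a `k`-edge sum of `G₁` and `G₂`. -/
def IsEdgeSum (k : ℕ) (G G₁ G₂ : Multigraph) : Prop :=
  Nonempty (EdgeSumWitness k G G₁ G₂)

/-- The edge sum is grounded. -/
def EdgeSumWitness.Grounded {k : ℕ} {G G₁ G₂ : Multigraph}
    (w : EdgeSumWitness k G G₁ G₂) : Prop :=
  (∃ v', v' ≠ w.v₁ ∧ G₁.EdgeDisjointPaths w.v₁ v' k) ∧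
  (∃ v', v' ≠ w.v₂ ∧ G₂.EdgeDisjointPaths w.v₂ v' k)

/-- `G` is a grounded `k`-edge sum of `G₁` and `G₂`. -/
def IsGroundedEdgeSum (k : ℕ) (G G₁ G₂ : Multigraph) : Prop :=
  ∃ w : EdgeSumWitness k G G₁ G₂, w.Grounded

/-! ### Auxiliary simple-graph operations -/

/-- Delete the vertex `t` from `T` (keeping it as an isolated vertex). -/
def delAt {τ : Type} (T : SimpleGraph τ) (t : τ) : SimpleGraph τ where
  Adj a b := T.Adj a b ∧ a ≠ t ∧ b ≠ t
  symm := ⟨fun a b h => ⟨h.1.symm, h.2.2, h.2.1⟩⟩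
  loopless := ⟨fun a h => T.loopless.irrefl a h.1⟩

lemma reach_delAt {τ : Type} (T : SimpleGraph τ) (t : τ) {a b : τ} (q : T.Walk a b)
    (ht : t ∉ q.support) : (delAt T t).Reachable a b := by
  induction q with
  | nil => exact SimpleGraph.Reachable.refl _
  | @cons u v w h p ih =>
      simp only [SimpleGraph.Walk.support_cons, List.mem_cons] at ht
      push_neg at ht
      have hv : v ≠ t := fun hv => ht.2 (hv ▸ p.start_mem_support)
      exact (SimpleGraph.Adj.reachable (G := delAt T t) ⟨h, Ne.symm ht.1, hv⟩).trans (ih ht.2)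

/-! ### Tree-cut decompositions -/

/-- A tree-cut decomposition of the multigraph `G`. -/
structure TreeCutDecomp (G : Multigraph) where
  T : Type
  finT : Finite T
  tree : SimpleGraph T
  isTree : tree.IsTree
  bag : T → Set G.V
  disj : ∀ s t : T, s ≠ t → Disjoint (bag s) (bag t)
  covers : ∀ v : G.V, ∃ t : T, v ∈ bag t

attribute [instance] TreeCutDecomp.finT

variable {G : Multigraph}

/-- The union of the bags on the `v`-side of the tree edge `uv`. -/
def TreeCutDecomp.sideSet (D : TreeCutDecomp G) (u v : D.T) : Set G.V :=
  {x | ∃ s, (D.tree.deleteEdges {s(u, v)}).Reachable v s ∧ x ∈ D.bag s}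

/-- The adhesion of a tree-cut decomposition. -/
noncomputable def TreeCutDecomp.adhesion (D : TreeCutDecomp G) : ℕ :=
  sSup {n | ∃ u v : D.T, D.tree.Adj u v ∧ n = (G.edgeCut (D.sideSet u v)).ncard}

lemma TreeCutDecomp.exists_periph (D : TreeCutDecomp G) (t : D.T) (v : G.V)
    (hv : v ∉ D.bag t) :
    ∃ u : D.T, D.tree.Adj t u ∧ ∃ s, v ∈ D.bag s ∧ (delAt D.tree t).Reachable s u := by
  classical
  obtain ⟨s, hs⟩ := D.covers v
  have hst : t ≠ s := fun h => hv (h ▸ hs)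
  obtain ⟨w⟩ := D.isTree.isConnected.preconnected t s
  obtain ⟨x, hadj, q, hq⟩ := SimpleGraph.Walk.exists_eq_cons_of_ne hst w.toPath.val
  have hP : (SimpleGraph.Walk.cons hadj q).IsPath := hq ▸ w.toPath.prop
  rw [SimpleGraph.Walk.cons_isPath_iff] at hP
  exact ⟨x, hadj, s, hs, (reach_delAt D.tree t q hP.2).symm⟩

open Classical in
/-- The map from `G` to the vertices of the torso at `t`. -/
noncomputable def TreeCutDecomp.proj (D : TreeCutDecomp G) (t : D.T) (v : G.V) :
    ↥(D.bag t) ⊕ {u : D.T // D.tree.Adj t u} :=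
  if hv : v ∈ D.bag t then Sum.inl ⟨v, hv⟩
  else Sum.inr ⟨(D.exists_periph t v hv).choose, (D.exists_periph t v hv).choose_spec.1⟩

/-- The torso of `G` at a node `t` of a tree-cut decomposition. -/
noncomputable def TreeCutDecomp.torso (D : TreeCutDecomp G) (t : D.T) : Multigraph where
  V := ↥(D.bag t) ⊕ {u : D.T // D.tree.Adj t u}
  E := {e : G.E // ¬ (Sym2.map (D.proj t) (G.ends e)).IsDiag}
  finV := inferInstance
  finE := inferInstance
  ends := fun e => Sym2.map (D.proj t) (G.ends e.val)
  no_loops := fun e => e.prop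

/-- The core vertices of the torso at `t`. -/
def TreeCutDecomp.torsoCore (D : TreeCutDecomp G) (t : D.T) : Set (D.torso t).V :=
  Set.range Sum.inl

/-! ### The 3-center and tree-cut width -/

/-- Condition (1): the immersion of `H` in `G` covers `X` and every vertex of `H`
of degree at most two is mapped into `X`. -/
def CenterCond (G : Multigraph) (X : Set G.V) (H : Multigraph) (I : WeakImmersion H G) : Prop :=
  X ⊆ Set.range I.vmap ∧ ∀ x : H.V, H.degree x ≤ 2 → I.vmap x ∈ X

/-- `C` is a 3-center of `(G, X)`: it admits an immersion in `G` satisfying (1) and is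
maximal with respect to immersion containment among all such graphs. -/
def IsThreeCenter (G : Multigraph) (X : Set G.V) (C : Multigraph) : Prop :=
  (∃ I : WeakImmersion C G, CenterCond G X C I) ∧
  ∀ H : Multigraph, (∃ I : WeakImmersion H G, CenterCond G X H I) → C.Immerses H

/-- The number of vertices of the 3-center of `(G, X)`. -/
noncomputable def threeCenterCard (G : Multigraph) (X : Set G.V) : ℕ :=
  sSup {n | ∃ C : Multigraph, IsThreeCenter G X C ∧ Nat.card C.V = n}

/-- The width of a tree-cut decomposition. -/
noncomputable def TreeCutDecomp.width (D : TreeCutDecomp G) : ℕ :=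
  max D.adhesion (sSup {n | ∃ t : D.T, n = threeCenterCard (D.torso t) (D.torsoCore t)})

/-- The tree-cut width of a multigraph. -/
noncomputable def tcw (G : Multigraph) : ℕ :=
  sInf {w | ∃ D : TreeCutDecomp G, D.width = w}

/-! ### Tree decompositions and tree-width -/

/-- A tree decomposition of the multigraph `G`. -/
structure TreeDecomp (G : Multigraph) where
  T : Type
  finT : Finite T
  tree : SimpleGraph T
  isTree : tree.IsTree
  bag : T → Set G.V
  covers_v : ∀ v : G.V, ∃ t : T, v ∈ bag t
  covers_e : ∀ e : G.E, ∃ (t : T) (x y : G.V), G.ends e = s(x, y) ∧ x ∈ bag t ∧ y ∈ bag t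
  connected : ∀ v : G.V, (SimpleGraph.induce {t : T | v ∈ bag t} tree).Connected

/-- The tree-width of a multigraph. -/
noncomputable def treewidth (G : Multigraph) : ℕ :=
  sInf {n | ∃ D : TreeDecomp G, ∀ t : D.T, (D.bag t).ncard ≤ n + 1}

/-! ### Walls and grids -/

def wallStep (r : ℕ) (a b : Fin r × Fin r) : Prop :=
  (a.1 = b.1 ∧ a.2.val + 1 = b.2.val) ∨
  (a.2 = b.2 ∧ a.1.val + 1 = b.1.val ∧ (a.1.val + 1) % 2 = (a.2.val + 1) % 2)

def wallAdj (r : ℕ) (a b : Fin r × Fin r) : Prop := wallStep r a b ∨ wallStep r b a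

lemma wallStep_ne {r : ℕ} {a b : Fin r × Fin r} (h : wallStep r a b) : a ≠ b := by
  rintro rfl
  rcases h with ⟨-, h⟩ | ⟨-, h, -⟩ <;> omega

/-- The `r`-wall `H_r`. -/
def wall (r : ℕ) : Multigraph where
  V := Fin r × Fin r
  E := {q : Sym2 (Fin r × Fin r) // ∃ a b, q = s(a, b) ∧ wallAdj r a b}
  finV := inferInstance
  finE := inferInstance
  ends := Subtype.val
  no_loops := by
    rintro ⟨q, a, b, rfl, hab⟩ hd
    rw [Sym2.mk_isDiag_iff] at hd
    subst hd
    rcases hab with h | h <;> exact wallStep_ne h rfl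

def gridStep (r : ℕ) (a b : Fin r × Fin r) : Prop :=
  (a.1 = b.1 ∧ a.2.val + 1 = b.2.val) ∨ (a.2 = b.2 ∧ a.1.val + 1 = b.1.val)

def gridAdj (r : ℕ) (a b : Fin r × Fin r) : Prop := gridStep r a b ∨ gridStep r b a

lemma gridStep_ne {r : ℕ} {a b : Fin r × Fin r} (h : gridStep r a b) : a ≠ b := by
  rintro rfl
  rcases h with ⟨-, h⟩ | ⟨-, h⟩ <;> omega

/-- The `r × r` grid. -/
def grid (r : ℕ) : Multigraph where
  V := Fin r × Fin r
  E := {q : Sym2 (Fin r × Fin r) // ∃ a b, q = s(a, b) ∧ gridAdj r a b}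
  finV := inferInstance
  finE := inferInstance
  ends := Subtype.val
  no_loops := by
    rintro ⟨q, a, b, rfl, hab⟩ hd
    rw [Sym2.mk_isDiag_iff] at hd
    subst hd
    rcases hab with h | h <;> exact gridStep_ne h rfl

/-! ### Subdivisions and minors -/

/-- `G` contains `H` as a subdivision: an immersion whose composite paths pairwise
meet only in common endpoints. -/
def ContainsSubdivision (G H : Multigraph) : Prop :=
  ∃ I : WeakImmersion H G, ∀ f f' : H.E, f ≠ f' → ∀ v : G.V,
    v ∈ I.pverts f → v ∈ I.pverts f' →
      ((I.pverts f).head? = some v ∨ (I.pverts f).getLast? = some v) ∧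
      ((I.pverts f').head? = some v ∨ (I.pverts f').getLast? = some v)

/-- A set of vertices is connected in `G`. -/
def ConnectedIn (G : Multigraph) (B : Set G.V) : Prop :=
  B.Nonempty ∧ ∀ a ∈ B, ∀ b ∈ B, ∃ (vs : List G.V) (es : List G.E),
    G.IsWalk vs es ∧ vs.head? = some a ∧ vs.getLast? = some b ∧ ∀ v ∈ vs, v ∈ B

/-- `G` contains `H` as a minor. -/
def HasMinor (G H : Multigraph) : Prop :=
  ∃ B : H.V → Set G.V,
    (∀ x, G.ConnectedIn (B x)) ∧
    (∀ x y, x ≠ y → Disjoint (B x) (B y)) ∧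
    ∃ η : H.E → G.E, Function.Injective η ∧
      ∀ (f : H.E) (x y : H.V), H.ends f = s(x, y) →
        ∃ a b, G.ends (η f) = s(a, b) ∧ a ∈ B x ∧ b ∈ B y

/-! ### Subgraphs, splitting off, suppression -/

/-- `A` is (isomorphic to) a subgraph of `G`. -/
def IsSubgraph (A G : Multigraph) : Prop :=
  ∃ (fv : A.V → G.V) (fe : A.E → G.E), Function.Injective fv ∧ Function.Injective fe ∧
    ∀ e, G.ends (fe e) = Sym2.map fv (A.ends e)

/-- `B` is obtained from `A` by splitting off a pair of incident edges. -/
def SplitOffRel (A B : Multigraph) : Prop :=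
  ∃ (e₁ e₂ : A.E) (x y z : A.V), e₁ ≠ e₂ ∧ x ≠ z ∧
    A.ends e₁ = s(x, y) ∧ A.ends e₂ = s(y, z) ∧
    ∃ (fV : A.V ≃ B.V) (fE : {e : A.E // e ≠ e₁ ∧ e ≠ e₂} ⊕ Unit ≃ B.E),
      (∀ e : {e : A.E // e ≠ e₁ ∧ e ≠ e₂},
        B.ends (fE (Sum.inl e)) = Sym2.map fV (A.ends e.val)) ∧
      B.ends (fE (Sum.inr ())) = s(fV x, fV z)

/-- `B` is obtained from `A` by suppressing a vertex of degree two (contracting one of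
its incident edges and deleting any resulting loops). -/
def SuppressTwoRel (A B : Multigraph) : Prop :=
  ∃ v : A.V, A.degree v = 2 ∧
    ∃ σ : A.V → B.V,
      (∀ x y, x ≠ v → y ≠ v → (σ x = σ y ↔ x = y)) ∧
      (∀ y : B.V, ∃ x, x ≠ v ∧ σ x = y) ∧
      (∃ a, a ≠ v ∧ (∃ e, A.ends e = s(v, a)) ∧ σ v = σ a) ∧
      ∃ τ : {e : A.E // ¬ (Sym2.map σ (A.ends e)).IsDiag} ≃ B.E,
        ∀ e, B.ends (τ e) = Sym2.map σ (A.ends e.val)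

/-- A multigraph together with a marked set of vertices. -/
structure MarkedGraph where
  G : Multigraph
  X : Set G.V

/-- One step of suppressing a vertex outside the marked set of degree at most two
(for degree zero this deletes the vertex). -/
def SuppressStep (A B : MarkedGraph) : Prop :=
  ∃ v : A.G.V, v ∉ A.X ∧ A.G.degree v ≤ 2 ∧
    ∃ σ : A.G.V → B.G.V,
      (∀ x y, x ≠ v → y ≠ v → (σ x = σ y ↔ x = y)) ∧
      (∀ y : B.G.V, ∃ x, x ≠ v ∧ σ x = y) ∧
      B.X = {y | ∃ x, x ∈ A.X ∧ σ x = y} ∧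
      (1 ≤ A.G.degree v → ∃ a, a ≠ v ∧ (∃ e, A.G.ends e = s(v, a)) ∧ σ v = σ a) ∧
      ∃ τ : {e : A.G.E // ¬ (Sym2.map σ (A.G.ends e)).IsDiag} ≃ B.G.E,
        ∀ e, B.G.ends (τ e) = Sym2.map σ (A.G.ends e.val)

/-! ### Trees and cycles as multigraphs -/

/-- A multigraph is a tree if it corresponds to a simple tree on its vertex set. -/
def IsTreeGraph (G : Multigraph) : Prop :=
  ∃ S : SimpleGraph G.V, S.IsTree ∧ ∃ φ : G.E ≃ S.edgeSet, ∀ e, (φ e : Sym2 G.V) = G.ends e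

/-- The cycle on `n + 3` vertices. -/
def cycleGraph (n : ℕ) : Multigraph where
  V := Fin (n + 3)
  E := Fin (n + 3)
  finV := inferInstance
  finE := inferInstance
  ends := fun i => s(i, i + 1)
  no_loops := by
    intro i hd
    rw [Sym2.mk_isDiag_iff] at hd
    have h1 : (i : Fin (n + 3)) + 0 = i + 1 := by simpa using hd
    have h01 : (0 : Fin (n + 3)) = 1 := add_left_cancel h1
    have := congrArg Fin.val h01
    simp [Fin.val_one] at this

/-- A matching in a multigraph: a set of pairwise vertex-disjoint edges. -/
def IsMatching (G : Multigraph) (M : Set G.E) : Prop :=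
  ∀ e ∈ M, ∀ e' ∈ M, e ≠ e' → ∀ v : G.V, v ∈ G.ends e → v ∉ G.ends e'

end Multigraph

/-!
Let `I` be a weak immersion of `K_{r+1}` in `G`. For any vertex set `U` that separates two
branch vertices, the `I`-paths between branch vertices on different sides of `U` are
edge-disjoint and each crosses `δ(U)`, so `|δ(U)| ≥ |S| · (r + 1 - |S|) ≥ r`, where `S` is the
set of branch vertices in `U`. Since every tree edge induces a cut of order less than `r`, no
tree edge separates two branch vertices, so all of them lie in a single bag `X_t`. Taking
`U = {v}` shows that every branch vertex has degree at least `r` in `G`, and hence in the torso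
at `t`, which then has `r + 1` vertices of degree at least `r`.
-/

namespace Multigraph

variable {G H : Multigraph}

lemma edgeCut_compl (U : Set G.V) : G.edgeCut Uᶜ = G.edgeCut U := by
  ext e
  constructor <;>
  · rintro ⟨a, b, hab, ha, hb⟩
    exact ⟨b, a, hab.trans Sym2.eq_swap, by simpa using hb, by simpa using ha⟩

lemma degree_eq_ncard_edgeCut_singleton (v : G.V) : G.degree v = (G.edgeCut {v}).ncard := by
  rw [degree, ← Nat.card_coe_set_eq]
  congr 2
  ext e
  refine ⟨fun hv => ?_, fun ⟨a, b, hab, ha, _⟩ => ?_⟩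
  · obtain ⟨w, hw⟩ := Sym2.mem_iff_exists.mp hv
    refine ⟨v, w, hw, rfl, fun hwv => G.no_loops e ?_⟩
    rw [hw, Set.mem_singleton_iff.mp hwv]
    exact Sym2.mk_isDiag_iff.mpr rfl
  · rw [Set.mem_singleton_iff.mp ha] at hab
    exact hab ▸ Sym2.mem_mk_left _ _

lemma IsWalk.exists_mem_edgeCut {U : Set G.V} :
    ∀ {vs : List G.V} {es : List G.E}, G.IsWalk vs es → ∀ {a b : G.V},
      vs.head? = some a → vs.getLast? = some b → a ∈ U → b ∉ U →
      ∃ e ∈ es, e ∈ G.edgeCut U := by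
  intro vs es hw
  induction hw with
  | nil v =>
    intro a b ha hb haU hbU
    simp only [List.head?_cons, List.getLast?_singleton, Option.some.injEq] at ha hb
    exact absurd (ha ▸ haU) (hb ▸ hbU)
  | @cons v vs es u e he hw ih =>
    intro a b ha hb haU hbU
    simp only [List.head?_cons, Option.some.injEq] at ha
    rw [List.getLast?_cons_cons] at hb
    by_cases hvU : v ∈ U
    · obtain ⟨e', he', hcut⟩ := ih rfl hb hvU hbU
      exact ⟨e', List.mem_cons_of_mem _ he', hcut⟩
    · exact ⟨e, List.mem_cons_self, u, v, he, ha ▸ haU, hvU⟩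

lemma ncard_mul_ncard_compl_le_ncard_edgeCut_completeGraph {n : ℕ} (S : Set (Fin n)) :
    S.ncard * Sᶜ.ncard ≤ ((completeGraph n).edgeCut S).ncard := by
  let cross : S × ↥Sᶜ → (completeGraph n).edgeCut S := fun p =>
    ⟨⟨s(p.1, p.2), Sym2.mk_isDiag_iff.not.mpr fun h => p.2.2 (h ▸ p.1.2)⟩,
      p.1.1, p.2.1, rfl, p.1.2, p.2.2⟩
  have hcross : Function.Injective cross := by
    rintro ⟨⟨a, ha⟩, ⟨b, hb⟩⟩ ⟨⟨a', ha'⟩, ⟨b', hb'⟩⟩ h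
    rcases Sym2.eq_iff.mp (congrArg (fun e => e.1.1) h) with ⟨rfl, rfl⟩ | ⟨rfl, -⟩
    · rfl
    · exact absurd ha hb'
  rw [← Nat.card_coe_set_eq S, ← Nat.card_coe_set_eq Sᶜ, ← Nat.card_prod,
    ← Nat.card_coe_set_eq]
  exact Nat.card_le_card_of_injective cross hcross

lemma le_ncard_mul_ncard_compl {n : ℕ} {S : Set (Fin (n + 1))} (hS : S.Nonempty)
    (hSc : Sᶜ.Nonempty) : n ≤ S.ncard * Sᶜ.ncard := by
  have hsum := Set.ncard_add_ncard_compl S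
  rw [Nat.card_eq_fintype_card, Fintype.card_fin] at hsum
  have h1 := (Set.ncard_pos (Set.toFinite S)).mpr hS
  have h2 := (Set.ncard_pos (Set.toFinite Sᶜ)).mpr hSc
  nlinarith

namespace WeakImmersion

lemma exists_mem_pedges_edgeCut (I : WeakImmersion H G) {U : Set G.V} {f : H.E}
    (hf : f ∈ H.edgeCut (I.vmap ⁻¹' U)) : ∃ e ∈ I.pedges f, e ∈ G.edgeCut U := by
  obtain ⟨a, b, hab, ha, hb⟩ := hf
  obtain ⟨x, y, hxy, hw, -, hx, hy⟩ := I.is_path f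
  rcases Sym2.eq_iff.mp (hab.symm.trans hxy) with ⟨rfl, rfl⟩ | ⟨rfl, rfl⟩
  · exact hw.exists_mem_edgeCut hx hy ha hb
  · rw [← edgeCut_compl]
    exact hw.exists_mem_edgeCut hx hy hb (Set.notMem_compl_iff.mpr ha)

/-- Edge-disjointness of the paths makes the choice of a crossing edge injective. -/
lemma ncard_edgeCut_preimage_le (I : WeakImmersion H G) (U : Set G.V) :
    (H.edgeCut (I.vmap ⁻¹' U)).ncard ≤ (G.edgeCut U).ncard := by
  choose e he hcut using fun f : H.edgeCut (I.vmap ⁻¹' U) => I.exists_mem_pedges_edgeCut f.2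
  have hinj : Function.Injective fun f => (⟨e f, hcut f⟩ : G.edgeCut U) := by
    intro f f' hff'
    by_contra hne
    have hee : e f = e f' := congrArg Subtype.val hff'
    exact I.edge_disjoint f f' (Subtype.coe_ne_coe.mpr hne) (e f) (he f) (hee ▸ he f')
  rw [← Nat.card_coe_set_eq, ← Nat.card_coe_set_eq]
  exact Nat.card_le_card_of_injective _ hinj

lemma le_ncard_edgeCut {n : ℕ} (I : WeakImmersion (completeGraph (n + 1)) G) {U : Set G.V}
    {a b : Fin (n + 1)} (ha : I.vmap a ∈ U) (hb : I.vmap b ∉ U) :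
    n ≤ (G.edgeCut U).ncard :=
  calc n ≤ (I.vmap ⁻¹' U).ncard * (I.vmap ⁻¹' U)ᶜ.ncard :=
        le_ncard_mul_ncard_compl ⟨a, ha⟩ ⟨b, hb⟩
    _ ≤ ((completeGraph (n + 1)).edgeCut (I.vmap ⁻¹' U)).ncard :=
        ncard_mul_ncard_compl_le_ncard_edgeCut_completeGraph _
    _ ≤ (G.edgeCut U).ncard := I.ncard_edgeCut_preimage_le U

lemma le_degree {n : ℕ} (hn : 1 ≤ n) (I : WeakImmersion (completeGraph (n + 1)) G)
    (x : Fin (n + 1)) : n ≤ G.degree (I.vmap x) := by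
  obtain ⟨y, hyx⟩ : ∃ y : Fin (n + 1), y ≠ x :=
    Fintype.exists_ne_of_one_lt_card (by simp; omega) x
  rw [degree_eq_ncard_edgeCut_singleton]
  exact I.le_ncard_edgeCut (a := x) (b := y) rfl (I.vmap_inj.ne hyx)

end WeakImmersion

namespace TreeCutDecomp

lemma ncard_edgeCut_sideSet_le_adhesion (D : TreeCutDecomp G) {u v : D.T}
    (huv : D.tree.Adj u v) : (G.edgeCut (D.sideSet u v)).ncard ≤ D.adhesion := by
  refine le_csSup ⟨Nat.card G.E, ?_⟩ ⟨u, v, huv, rfl⟩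
  rintro _ ⟨-, -, -, rfl⟩
  rw [← Set.ncard_univ]
  exact Set.ncard_le_ncard (Set.subset_univ _)

/-- The first edge `su` of the tree path from `s` to `t` separates `X_s` from `X_t`. -/
lemma exists_adj_separating (D : TreeCutDecomp G) {s t : D.T} (hst : s ≠ t) :
    ∃ u, D.tree.Adj s u ∧ D.bag t ⊆ D.sideSet s u ∧ Disjoint (D.bag s) (D.sideSet s u) := by
  classical
  obtain ⟨w⟩ := D.isTree.connected.preconnected s t
  obtain ⟨u, hsu, q, hq⟩ := SimpleGraph.Walk.exists_eq_cons_of_ne hst w.toPath.val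
  have hpath : (SimpleGraph.Walk.cons hsu q).IsPath := hq ▸ w.toPath.prop
  rw [SimpleGraph.Walk.cons_isPath_iff] at hpath
  refine ⟨u, hsu, fun x hx => ⟨t, ⟨q.toDeleteEdges _ fun e he hmem => ?_⟩, hx⟩, ?_⟩
  · rw [Set.mem_singleton_iff] at hmem
    subst hmem
    exact hpath.2 (q.fst_mem_support_of_mem_edges he)
  · refine Set.disjoint_left.mpr fun x hx ⟨s', hreach, hx'⟩ => ?_
    obtain rfl : s' = s := by_contra fun hne => Set.disjoint_left.mp (D.disj s' s hne) hx' hx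
    have hbridge := SimpleGraph.isAcyclic_iff_forall_adj_isBridge.mp D.isTree.isAcyclic hsu
    exact SimpleGraph.isBridge_iff.mp hbridge hreach.symm

lemma proj_eq_inl (D : TreeCutDecomp G) {t : D.T} {v : G.V} (hv : v ∈ D.bag t) :
    D.proj t v = Sum.inl ⟨v, hv⟩ := by
  simp only [proj, dif_pos hv]

lemma proj_ne (D : TreeCutDecomp G) {t : D.T} {v w : G.V} (hv : v ∈ D.bag t) (hwv : w ≠ v) :
    D.proj t w ≠ D.proj t v := by
  rw [D.proj_eq_inl hv]
  by_cases hw : w ∈ D.bag t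
  · simp [D.proj_eq_inl hw, hwv]
  · simp [proj, dif_neg hw]

/-- Edges at a vertex of `X_t` do not collapse to loops in the torso at `t`. -/
lemma degree_le_degree_torso (D : TreeCutDecomp G) {t : D.T} {v : G.V} (hv : v ∈ D.bag t) :
    G.degree v ≤ (D.torso t).degree (Sum.inl ⟨v, hv⟩) := by
  have hlift : ∀ e : {e : G.E // v ∈ G.ends e},
      ∃ he : ¬ (Sym2.map (D.proj t) (G.ends e)).IsDiag,
        Sum.inl ⟨v, hv⟩ ∈ (D.torso t).ends ⟨e, he⟩ := by
    rintro ⟨e, hve⟩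
    obtain ⟨w, hw⟩ := Sym2.mem_iff_exists.mp hve
    have hwv : w ≠ v := by
      rintro rfl
      exact G.no_loops e (hw ▸ Sym2.mk_isDiag_iff.mpr rfl)
    refine ⟨?_, ?_⟩
    · rw [hw, Sym2.map_mk, Sym2.mk_isDiag_iff]
      exact fun h => D.proj_ne hv hwv h.symm
    · show _ ∈ Sym2.map (D.proj t) (G.ends e)
      rw [hw, Sym2.map_mk, D.proj_eq_inl hv]
      exact Sym2.mem_mk_left _ _
  choose hnd hmem using hlift
  exact Nat.card_le_card_of_injective (fun e => ⟨⟨e, hnd e⟩, hmem e⟩)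
    fun e e' h => Subtype.ext (congrArg (fun f => f.1.1) h)

end TreeCutDecomp

end Multigraph

open Multigraph in
theorem no_clique_immersion_of_treeCutDecomp_general (r : ℕ) (G : Multigraph)
    (D : TreeCutDecomp G) (hadh : D.adhesion < r)
    (htorso : ∀ t : D.T, {v : (D.torso t).V | r ≤ (D.torso t).degree v}.ncard ≤ r) :
    ¬ G.Immerses (completeGraph (r + 1)) := by
  rintro ⟨I⟩
  choose home hhome using fun x : Fin (r + 1) => D.covers (I.vmap x)
  have hsame : ∀ x : Fin (r + 1), home x = home 0 := by
    intro x
    by_contra hne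
    obtain ⟨u, hadj, hsub, hdisj⟩ := D.exists_adj_separating hne
    have hlarge := I.le_ncard_edgeCut (hsub (hhome 0)) (Set.disjoint_left.mp hdisj (hhome x))
    have hsmall := D.ncard_edgeCut_sideSet_le_adhesion hadj
    omega
  have hbag : ∀ x, I.vmap x ∈ D.bag (home 0) := fun x => hsame x ▸ hhome x
  let branch : Fin (r + 1) → (D.torso (home 0)).V := fun x => Sum.inl ⟨I.vmap x, hbag x⟩
  have hbranch : Function.Injective branch := fun x y h =>
    I.vmap_inj (congrArg Subtype.val (Sum.inl_injective h))
  have hhigh : Set.range branch ⊆ {v | r ≤ (D.torso (home 0)).degree v} := by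
    rintro _ ⟨x, rfl⟩
    exact (I.le_degree (by omega) x).trans (D.degree_le_degree_torso (hbag x))
  have hmany := Set.ncard_le_ncard hhigh
  rw [Set.ncard_range_of_injective hbranch, Nat.card_eq_fintype_card, Fintype.card_fin] at hmany
  have hfew := htorso (home 0)
  omega

open Multigraph in
/-- a graph with a tree-cut decomposition of adhesion less than `r`
whose torsos have `(r, r)`-bounded degree has no `K_{r+1}` immersion. -/
theorem no_clique_immersion_of_treeCutDecomp (r : ℕ) (hr : 1 ≤ r) (G : Multigraph)
    (D : TreeCutDecomp G) (hadh : D.adhesion < r)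
    (htorso : ∀ t : D.T, {v : (D.torso t).V | r ≤ (D.torso t).degree v}.ncard ≤ r) :
    ¬ G.Immerses (completeGraph (r + 1)) :=
  no_clique_immersion_of_treeCutDecomp_general r G D hadh htorso
end

section
/- Let G be a graph and X ⊆ V(G). There is a unique maximal graph H (with respect to immersion containment) admitting a weak immersion (π_v, π_e) in G such that X ⊆ π_v(V(H)) and every vertex x of H with degree at most 2 satisfies π_v(x) ∈ X. Equivalently, this 3-center is the graph obtained from G by repeatedly suppressing vertices of V(G) − X having degree at most two. -/
open Sym2

namespace Multigraph

variable {G : Multigraph}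

/-!
Suppressing a vertex `v ∉ X` of degree at most two does not change the 3-center. An immersion
satisfying (1) avoids `v`, since a preimage of `v` would have degree at most two and hence lie
over `X`; so it pushes forward along the contraction. Conversely an immersion into the
suppressed graph lifts back, re-routing through `v` along a contracted edge, and as `v` has
degree at most two, only one lifted path can pass through it. Once no such vertex is left,
the graph is its own 3-center. Two 3-centers immerse into each other, so they have equally many
vertices and edges; then every immersed path is a single edge and the immersion is an
isomorphism.

Immersed paths are handled as reachability in the simple graph spanned by a set of edges, and
only turned back into paths when an immersion is assembled.
-/
theorem _root_.SimpleGraph.Reachable.map_of_adj {α β : Type*} {K : SimpleGraph α}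
    {K' : SimpleGraph β} (φ : α → β) (hφ : ∀ a b, K.Adj a b → K'.Reachable (φ a) (φ b))
    {a b : α} (h : K.Reachable a b) : K'.Reachable (φ a) (φ b) := by
  obtain ⟨p⟩ := h
  induction p with
  | nil => rfl
  | cons hadj _ ih => exact (hφ _ _ hadj).trans ih

variable {H : Multigraph}

lemma exists_ends_eq (G : Multigraph) (e : G.E) : ∃ x y, G.ends e = s(x, y) ∧ x ≠ y := by
  induction h : G.ends e using Sym2.ind with
  | _ x y => exact ⟨x, y, rfl, fun hxy => G.no_loops e (h ▸ Sym2.mk_isDiag_iff.2 hxy)⟩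

lemma exists_neighbor {v : G.V} (h : 1 ≤ G.degree v) : ∃ t, t ≠ v ∧ ∃ e, G.ends e = s(v, t) := by
  obtain ⟨⟨e, he⟩⟩ := (Nat.card_pos_iff.1 h).1
  exact ⟨_, Sym2.other_ne (G.no_loops e) he, e, (Sym2.other_spec he).symm⟩

lemma one_le_degree {v : G.V} {e : G.E} (he : v ∈ G.ends e) : 1 ≤ G.degree v :=
  Nat.card_pos_iff.2 ⟨⟨⟨e, he⟩⟩, inferInstance⟩

lemma three_le_degree {v : G.V} {e₁ e₂ e₃ : G.E} (h₁ : v ∈ G.ends e₁) (h₂ : v ∈ G.ends e₂)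
    (h₃ : v ∈ G.ends e₃) (h₁₂ : e₁ ≠ e₂) (h₁₃ : e₁ ≠ e₃) (h₂₃ : e₂ ≠ e₃) :
    3 ≤ G.degree v := by
  have hcard : ({e₁, e₂, e₃} : Set G.E).ncard = 3 :=
    Set.ncard_eq_three.2 ⟨_, _, _, h₁₂, h₁₃, h₂₃, rfl⟩
  calc 3 = ({e₁, e₂, e₃} : Set G.E).ncard := hcard.symm
    _ ≤ {e | v ∈ G.ends e}.ncard :=
      Set.ncard_le_ncard (by rintro e (rfl | rfl | rfl) <;> assumption) (Set.toFinite _)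

def edgeGraph (G : Multigraph) (S : Set G.E) : SimpleGraph G.V :=
  SimpleGraph.fromRel fun a b => ∃ e ∈ S, G.ends e = s(a, b)

lemma edgeGraph_adj {S : Set G.E} {a b : G.V} :
    (G.edgeGraph S).Adj a b ↔ a ≠ b ∧ ∃ e ∈ S, G.ends e = s(a, b) := by
  simp only [edgeGraph, SimpleGraph.fromRel_adj, Sym2.eq_swap (a := b), or_self]

lemma edgeGraph_mono {S T : Set G.E} (h : S ⊆ T) : G.edgeGraph S ≤ G.edgeGraph T := by
  intro a b
  simp only [edgeGraph_adj]
  exact fun ⟨hab, e, he, hends⟩ => ⟨hab, e, h he, hends⟩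

lemma IsWalk.reachable {vs : List G.V} {es : List G.E} (hw : G.IsWalk vs es) {a b : G.V}
    (ha : vs.head? = some a) (hb : vs.getLast? = some b) :
    (G.edgeGraph {e | e ∈ es}).Reachable a b := by
  induction hw generalizing a with
  | nil v =>
    simp only [List.head?_cons, List.getLast?_singleton, Option.some.injEq] at ha hb
    rw [← ha, ← hb]
  | @cons w _ es u e he _ ih =>
    simp only [List.head?_cons, Option.some.injEq] at ha
    subst ha
    have hrest := (ih rfl (by rwa [List.getLast?_cons_cons] at hb)).mono
      (edgeGraph_mono (T := {e' | e' ∈ e :: es}) fun e' he' => List.mem_cons_of_mem e he')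
    refine SimpleGraph.Reachable.trans ?_ hrest
    by_cases huw : u = w
    · rw [huw]
    · exact (edgeGraph_adj.2 ⟨huw, e, List.mem_cons_self, he⟩).reachable

lemma exists_isWalk_support {S : Set G.E} {a b : G.V} (p : (G.edgeGraph S).Walk a b) :
    ∃ es : List G.E, G.IsWalk p.support es ∧ ∀ e ∈ es, e ∈ S := by
  induction p with
  | nil => exact ⟨[], IsWalk.nil _, by simp⟩
  | @cons u w _ hadj p ih =>
    obtain ⟨es, hw, hS⟩ := ih
    obtain ⟨-, e, he, hends⟩ := edgeGraph_adj.1 hadj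
    rw [← p.cons_tail_support] at hw
    refine ⟨e :: es, ?_, ?_⟩
    · rw [SimpleGraph.Walk.support_cons, ← p.cons_tail_support]
      exact IsWalk.cons u e hends hw
    · simpa [he] using hS

lemma exists_isPathBetween_of_reachable {S : Set G.E} {a b : G.V}
    (h : (G.edgeGraph S).Reachable a b) :
    ∃ vs es, G.IsPathBetween a b vs es ∧ ∀ e ∈ es, e ∈ S := by
  obtain ⟨p, hp⟩ := h.exists_isPath
  obtain ⟨es, hw, hS⟩ := exists_isWalk_support p
  refine ⟨p.support, es, ⟨hw, hp.support_nodup, ?_, ?_⟩, hS⟩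
  · rw [List.head?_eq_some_head (by simp), SimpleGraph.Walk.head_support]
  · rw [List.getLast?_eq_some_getLast (by simp), SimpleGraph.Walk.getLast_support]

lemma exists_mem_ends_of_reachable {S : Set G.E} {a b : G.V}
    (h : (G.edgeGraph S).Reachable a b) (hab : a ≠ b) : ∃ e ∈ S, a ∈ G.ends e := by
  obtain ⟨p⟩ := h
  cases p with
  | nil => exact absurd rfl hab
  | cons hadj _ =>
    obtain ⟨-, e, he, hends⟩ := edgeGraph_adj.1 hadj
    exact ⟨e, he, hends ▸ Sym2.mem_mk_left _ _⟩

lemma ends_eq_of_reachable_singleton {e : G.E} {a b : G.V}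
    (h : (G.edgeGraph {e}).Reachable a b) (hab : a ≠ b) : G.ends e = s(a, b) := by
  obtain ⟨_, rfl, ha⟩ := exists_mem_ends_of_reachable h hab
  obtain ⟨_, rfl, hb⟩ := exists_mem_ends_of_reachable h.symm hab.symm
  exact (Sym2.mem_and_mem_iff hab).1 ⟨ha, hb⟩

namespace WeakImmersion

lemma exists_reachable (I : WeakImmersion H G) (f : H.E) :
    ∃ x y, H.ends f = s(x, y) ∧ x ≠ y ∧
      (G.edgeGraph {e | e ∈ I.pedges f}).Reachable (I.vmap x) (I.vmap y) := by
  obtain ⟨x, y, hxy, hp⟩ := I.is_path f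
  refine ⟨x, y, hxy, ?_, hp.1.reachable hp.2.2.1 hp.2.2.2⟩
  rintro rfl
  exact H.no_loops f (hxy ▸ Sym2.mk_isDiag_iff.2 rfl)

lemma exists_of_reachable (φ : H.V → G.V) (hφ : Function.Injective φ) (S : H.E → Set G.E)
    (hS : Pairwise fun f f' => Disjoint (S f) (S f'))
    (hreach : ∀ f, ∃ x y, H.ends f = s(x, y) ∧ (G.edgeGraph (S f)).Reachable (φ x) (φ y)) :
    ∃ I : WeakImmersion H G, I.vmap = φ := by
  choose x y hxy hr using hreach
  choose vs es hp hes using fun f => exists_isPathBetween_of_reachable (hr f)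
  exact ⟨⟨φ, hφ, vs, es, fun f => ⟨x f, y f, hxy f, hp f⟩,
    fun f f' hne e he he' => Set.disjoint_left.1 (hS hne) (hes f e he) (hes f' e he')⟩, rfl⟩

lemma exists_mem_pedges_mem_ends (I : WeakImmersion H G) {f : H.E} {x : H.V}
    (hx : x ∈ H.ends f) : ∃ e ∈ I.pedges f, I.vmap x ∈ G.ends e := by
  obtain ⟨a, b, hab, hne, hr⟩ := I.exists_reachable f
  rw [hab, Sym2.mem_iff] at hx
  rcases hx with rfl | rfl
  · exact exists_mem_ends_of_reachable hr (I.vmap_inj.ne hne)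
  · exact exists_mem_ends_of_reachable hr.symm (I.vmap_inj.ne hne.symm)

lemma injective_of_mem_pedges (I : WeakImmersion H G) {ψ : H.E → G.E}
    (hψ : ∀ f, ψ f ∈ I.pedges f) : Function.Injective ψ := by
  intro f g hfg
  by_contra hne
  exact I.edge_disjoint f g hne _ (hψ f) (hfg ▸ hψ g)

lemma degree_le (I : WeakImmersion H G) (x : H.V) : H.degree x ≤ G.degree (I.vmap x) := by
  choose e he hxe using fun f : {f // x ∈ H.ends f} => I.exists_mem_pedges_mem_ends f.2
  refine Nat.card_le_card_of_injective (fun f => ⟨e f, hxe f⟩) fun f g hfg => ?_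
  have hefg : e f = e g := congrArg Subtype.val hfg
  by_contra hne
  refine I.edge_disjoint f g (Subtype.coe_ne_coe.2 hne) _ (he f) ?_
  rw [hefg]
  exact he g

lemma exists_injective_mem_pedges (I : WeakImmersion H G) :
    ∃ ψ : H.E → G.E, Function.Injective ψ ∧ ∀ f, ψ f ∈ I.pedges f := by
  have hne : ∀ f, ∃ e, e ∈ I.pedges f := fun f => by
    obtain ⟨x, y, hxy, -⟩ := H.exists_ends_eq f
    obtain ⟨e, he, -⟩ := I.exists_mem_pedges_mem_ends (hxy ▸ Sym2.mem_mk_left x y)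
    exact ⟨e, he⟩
  choose ψ hψ using hne
  exact ⟨ψ, I.injective_of_mem_pedges hψ, hψ⟩

end WeakImmersion

lemma nonempty_iso_of_weakImmersion {C C' : Multigraph} (I : WeakImmersion C C')
    (J : WeakImmersion C' C) : Nonempty (Iso C C') := by
  obtain ⟨ψ, hψ, hψI⟩ := I.exists_injective_mem_pedges
  obtain ⟨χ, hχ, -⟩ := J.exists_injective_mem_pedges
  have hψ_bij : Function.Bijective ψ := (Nat.bijective_iff_injective_and_card ψ).2
    ⟨hψ, (Nat.card_le_card_of_injective ψ hψ).antisymm (Nat.card_le_card_of_injective χ hχ)⟩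
  have hvmap_bij : Function.Bijective I.vmap := (Nat.bijective_iff_injective_and_card _).2
    ⟨I.vmap_inj, (Nat.card_le_card_of_injective _ I.vmap_inj).antisymm
      (Nat.card_le_card_of_injective _ J.vmap_inj)⟩
  have hpedges : ∀ f, {e | e ∈ I.pedges f} ⊆ {ψ f} := by
    intro f e he
    obtain ⟨g, rfl⟩ := hψ_bij.2 e
    by_contra hne
    exact I.edge_disjoint f g (fun hfg => hne (hfg ▸ rfl)) _ he (hψI g)
  refine ⟨⟨Equiv.ofBijective _ hvmap_bij, Equiv.ofBijective ψ hψ_bij, fun f => ?_⟩⟩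
  obtain ⟨x, y, hxy, hne, hr⟩ := I.exists_reachable f
  rw [Equiv.ofBijective_apply, ends_eq_of_reachable_singleton
    (hr.mono (edgeGraph_mono (hpedges f))) (I.vmap_inj.ne hne), hxy]
  rfl

lemma CenterCond.vmap_ne {X : Set G.V} {I : WeakImmersion H G} (hI : CenterCond G X H I)
    {v : G.V} (hv : v ∉ X) (hdeg : G.degree v ≤ 2) (x : H.V) : I.vmap x ≠ v := by
  rintro rfl
  exact hv (hI.2 x ((I.degree_le x).trans hdeg))

lemma isThreeCenter_self {X : Set G.V} (h : ∀ v, v ∉ X → 2 < G.degree v) :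
    IsThreeCenter G X G := by
  obtain ⟨I, hI⟩ := WeakImmersion.exists_of_reachable (G := G) id Function.injective_id
    (fun f => {f}) (fun f g hne => Set.disjoint_singleton.2 hne) fun f => by
      obtain ⟨x, y, hxy, hne⟩ := G.exists_ends_eq f
      exact ⟨x, y, hxy, (edgeGraph_adj.2 ⟨hne, f, Set.mem_singleton f, hxy⟩).reachable⟩
  refine ⟨⟨I, fun x _ => ⟨x, by rw [hI]; rfl⟩, fun x hx => ?_⟩, fun _ ⟨J, _⟩ => ⟨J⟩⟩
  rw [hI]
  by_contra hxX
  exact (h x hxX).not_ge hx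

def empty : Multigraph :=
  ⟨PEmpty, PEmpty, inferInstance, inferInstance, PEmpty.elim, fun e => e.elim⟩

instance : IsEmpty empty.V := inferInstanceAs (IsEmpty PEmpty)

lemma immerses_of_isEmpty (G H : Multigraph) [IsEmpty H.V] : G.Immerses H := by
  obtain ⟨I, -⟩ := WeakImmersion.exists_of_reachable (G := G) isEmptyElim
    (Function.injective_of_subsingleton _) (fun _ => ∅) (fun _ _ _ => Set.disjoint_empty _)
    fun f => isEmptyElim (H.exists_ends_eq f).choose
  exact ⟨I⟩

lemma isThreeCenter_empty [Subsingleton G.V] {X : Set G.V} (hX : X = ∅) :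
    IsThreeCenter G X empty := by
  obtain ⟨I⟩ := immerses_of_isEmpty G empty
  refine ⟨⟨I, by simp [hX], fun x => x.elim⟩, fun H ⟨J, hJ⟩ => ?_⟩
  have : IsEmpty H.V := by
    refine ⟨fun x => ?_⟩
    have hdeg : H.degree x = 0 := by
      refine Nat.card_eq_zero.2 (Or.inl ⟨fun ⟨f, _⟩ => ?_⟩)
      obtain ⟨a, b, -, hne⟩ := H.exists_ends_eq f
      exact hne (J.vmap_inj (Subsingleton.elim _ _))
    simpa [hX] using hJ.2 x (by omega)
  exact immerses_of_isEmpty _ _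

section Suppression

variable {A B : Multigraph} {v : A.V} {σ : A.V → B.V}

lemma reachable_contract (τ : {e : A.E // ¬ (Sym2.map σ (A.ends e)).IsDiag} ≃ B.E)
    (hτ : ∀ e, B.ends (τ e) = Sym2.map σ (A.ends e.val)) {S : Set A.E} {a b : A.V}
    (h : (A.edgeGraph S).Reachable a b) :
    (B.edgeGraph {e' | (τ.symm e' : A.E) ∈ S}).Reachable (σ a) (σ b) := by
  refine h.map_of_adj σ fun a b hab => ?_
  obtain ⟨-, e, he, hends⟩ := edgeGraph_adj.1 hab
  by_cases hσ : σ a = σ b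
  · rw [hσ]
  have hkept : ¬ (Sym2.map σ (A.ends e)).IsDiag := by
    rwa [hends, Sym2.map_mk, Sym2.mk_isDiag_iff]
  refine (edgeGraph_adj.2 ⟨hσ, τ ⟨e, hkept⟩, ?_, by rw [hτ, hends, Sym2.map_mk]⟩).reachable
  simpa using he

lemma mem_ends_of_isDiag (hσ : ∀ x y, x ≠ v → y ≠ v → (σ x = σ y ↔ x = y)) {e : A.E}
    (he : (Sym2.map σ (A.ends e)).IsDiag) : v ∈ A.ends e := by
  obtain ⟨x, y, hxy, hne⟩ := A.exists_ends_eq e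
  rw [hxy, Sym2.map_mk, Sym2.mk_isDiag_iff] at he
  rw [hxy, Sym2.mem_iff]
  by_contra! h
  exact hne ((hσ x y h.1.symm h.2.symm).1 he)

/-- Contracted edges are needed to route lifted paths through `v`; admitting them only next to
a preimage meeting `v` keeps lifts of disjoint sets disjoint, because `v` has degree at most
two. -/
def liftEdges (v : A.V) (τ : {e : A.E // ¬ (Sym2.map σ (A.ends e)).IsDiag} ≃ B.E)
    (S : Set B.E) : Set A.E :=
  {e | (∃ e' ∈ S, e = τ.symm e') ∨
    ((Sym2.map σ (A.ends e)).IsDiag ∧ ∃ e' ∈ S, v ∈ A.ends (τ.symm e'))}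

lemma disjoint_liftEdges (hσ : ∀ x y, x ≠ v → y ≠ v → (σ x = σ y ↔ x = y))
    (hdeg : A.degree v ≤ 2) (τ : {e : A.E // ¬ (Sym2.map σ (A.ends e)).IsDiag} ≃ B.E)
    {S T : Set B.E} (h : Disjoint S T) : Disjoint (liftEdges v τ S) (liftEdges v τ T) := by
  have hpre : ∀ e₁ ∈ S, ∀ e₂ ∈ T, (τ.symm e₁ : A.E) ≠ τ.symm e₂ := fun e₁ h₁ e₂ h₂ heq =>
    Set.disjoint_left.1 h h₁ (τ.symm.injective (Subtype.ext heq) ▸ h₂)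
  refine Set.disjoint_left.2 ?_
  rintro e (⟨e₁, h₁, rfl⟩ | ⟨hdiag, e₁, h₁, hv₁⟩) (⟨e₂, h₂, he⟩ | ⟨hdiag', e₂, h₂, hv₂⟩)
  · exact hpre e₁ h₁ e₂ h₂ he
  · exact (τ.symm e₁).2 hdiag'
  · exact (τ.symm e₂).2 (he ▸ hdiag)
  · have := three_le_degree (mem_ends_of_isDiag hσ hdiag) hv₁ hv₂
      (fun heq => (τ.symm e₁).2 (heq ▸ hdiag)) (fun heq => (τ.symm e₂).2 (heq ▸ hdiag))
      (hpre e₁ h₁ e₂ h₂)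
    omega

/-- An end of the preimage at `v` is reached through the contracted edge `v a`, as
`ρ (σ v) = a`. -/
lemma reachable_lift_of_ends (hσ : ∀ x y, x ≠ v → y ≠ v → (σ x = σ y ↔ x = y))
    (hmerge : 1 ≤ A.degree v → ∃ a, a ≠ v ∧ (∃ e, A.ends e = s(v, a)) ∧ σ v = σ a)
    (τ : {e : A.E // ¬ (Sym2.map σ (A.ends e)).IsDiag} ≃ B.E) {ρ : B.V → A.V}
    (hρv : ∀ y, ρ y ≠ v) (hσρ : ∀ y, σ (ρ y) = y) {S : Set B.E} {e' : B.E} (he' : e' ∈ S)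
    {p q : A.V} (hpq : A.ends (τ.symm e') = s(p, q)) (hq : q ≠ v) :
    (A.edgeGraph (liftEdges v τ S)).Reachable (ρ (σ p)) (ρ (σ q)) := by
  have hρσ : ∀ x, x ≠ v → ρ (σ x) = x := fun x hx => (hσ _ _ (hρv _) hx).1 (hσρ _)
  have hadj : (A.edgeGraph (liftEdges v τ S)).Adj p q := edgeGraph_adj.2
    ⟨fun h => A.no_loops _ (hpq ▸ Sym2.mk_isDiag_iff.2 h), _, Or.inl ⟨e', he', rfl⟩, hpq⟩
  rw [hρσ q hq]
  by_cases hp : p = v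
  · subst hp
    obtain ⟨a, ha, ⟨e₀, he₀⟩, hσa⟩ := hmerge (one_le_degree (hpq ▸ Sym2.mem_mk_left _ _))
    have he₀S : e₀ ∈ liftEdges p τ S :=
      Or.inr ⟨by rw [he₀, Sym2.map_mk, Sym2.mk_isDiag_iff, hσa], e', he',
        hpq ▸ Sym2.mem_mk_left _ _⟩
    rw [hσa, hρσ a ha]
    exact (edgeGraph_adj.2 ⟨ha, e₀, he₀S, by rw [he₀, Sym2.eq_swap]⟩).reachable.trans
      hadj.reachable
  · rw [hρσ p hp]
    exact hadj.reachable

lemma reachable_lift (hσ : ∀ x y, x ≠ v → y ≠ v → (σ x = σ y ↔ x = y))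
    (hmerge : 1 ≤ A.degree v → ∃ a, a ≠ v ∧ (∃ e, A.ends e = s(v, a)) ∧ σ v = σ a)
    (τ : {e : A.E // ¬ (Sym2.map σ (A.ends e)).IsDiag} ≃ B.E)
    (hτ : ∀ e, B.ends (τ e) = Sym2.map σ (A.ends e.val)) {ρ : B.V → A.V}
    (hρv : ∀ y, ρ y ≠ v) (hσρ : ∀ y, σ (ρ y) = y) {S : Set B.E} {y z : B.V}
    (h : (B.edgeGraph S).Reachable y z) :
    (A.edgeGraph (liftEdges v τ S)).Reachable (ρ y) (ρ z) := by
  refine h.map_of_adj ρ fun y z hyz => ?_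
  obtain ⟨-, e', he', hends'⟩ := edgeGraph_adj.1 hyz
  have key := fun p q => reachable_lift_of_ends (p := p) (q := q) hσ hmerge τ hρv hσρ he'
  have hmap : Sym2.map σ (A.ends (τ.symm e')) = s(y, z) := by
    rw [← hτ, Equiv.apply_symm_apply, hends']
  obtain ⟨p, q, hpq, hne⟩ := A.exists_ends_eq (τ.symm e')
  rw [hpq, Sym2.map_mk, Sym2.eq_iff] at hmap
  rcases hmap with ⟨rfl, rfl⟩ | ⟨rfl, rfl⟩ <;> by_cases hq : q = v
  · exact (key q p (hpq.trans Sym2.eq_swap) (hq ▸ hne)).symm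
  · exact key p q hpq hq
  · exact key q p (hpq.trans Sym2.eq_swap) (hq ▸ hne)
  · exact (key p q hpq hq).symm

end Suppression

namespace SuppressStep

variable {A B : MarkedGraph}

lemma exists_centerCond_of_source (h : SuppressStep A B) {H : Multigraph}
    {I : WeakImmersion H A.G} (hI : CenterCond A.G A.X H I) :
    ∃ J : WeakImmersion H B.G, CenterCond B.G B.X H J := by
  obtain ⟨v, hvX, hdeg, σ, hσ, -, hX, -, τ, hτ⟩ := h
  have hv := hI.vmap_ne hvX hdeg
  obtain ⟨J, hJ⟩ := WeakImmersion.exists_of_reachable (σ ∘ I.vmap)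
    (fun x y hxy => I.vmap_inj ((hσ _ _ (hv x) (hv y)).1 hxy))
    (fun f => {e' | (τ.symm e' : A.G.E) ∈ I.pedges f})
    (fun f g hne => Set.disjoint_left.2 fun _ h₁ h₂ => I.edge_disjoint f g hne _ h₁ h₂)
    fun f => by
      obtain ⟨x, y, hxy, -, hr⟩ := I.exists_reachable f
      exact ⟨x, y, hxy, reachable_contract τ hτ hr⟩
  refine ⟨J, ?_, fun c hc => ?_⟩ <;> rw [hJ, hX]
  · rintro _ ⟨x, hx, rfl⟩
    obtain ⟨c, rfl⟩ := hI.1 hx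
    exact ⟨c, rfl⟩
  · exact ⟨_, hI.2 c hc, rfl⟩

lemma exists_centerCond_of_target (h : SuppressStep A B) {H : Multigraph}
    {I : WeakImmersion H B.G} (hI : CenterCond B.G B.X H I) :
    ∃ J : WeakImmersion H A.G, CenterCond A.G A.X H J := by
  obtain ⟨v, hvX, hdeg, σ, hσ, hsurj, hX, hmerge, τ, hτ⟩ := h
  choose ρ hρv hσρ using hsurj
  have hρσ : ∀ x ∈ A.X, ρ (σ x) = x := fun x hx =>
    (hσ _ _ (hρv _) (ne_of_mem_of_not_mem hx hvX)).1 (hσρ _)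
  obtain ⟨J, hJ⟩ := WeakImmersion.exists_of_reachable (ρ ∘ I.vmap)
    ((Function.LeftInverse.injective hσρ).comp I.vmap_inj)
    (fun f => liftEdges v τ {e | e ∈ I.pedges f})
    (fun f g hne => disjoint_liftEdges hσ hdeg τ (Set.disjoint_left.2 (I.edge_disjoint f g hne)))
    fun f => by
      obtain ⟨x, y, hxy, -, hr⟩ := I.exists_reachable f
      exact ⟨x, y, hxy, reachable_lift hσ hmerge τ hτ hρv hσρ hr⟩
  refine ⟨J, fun x hx => ?_, fun c hc => ?_⟩ <;> rw [hJ]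
  · obtain ⟨c, hc⟩ := hI.1 (hX ▸ ⟨x, hx, rfl⟩ : σ x ∈ B.X)
    exact ⟨c, by rw [Function.comp_apply, hc, hρσ x hx]⟩
  · obtain ⟨x, hx, hxc⟩ := hX ▸ hI.2 c hc
    rw [Function.comp_apply, ← hxc, hρσ x hx]
    exact hx

lemma isThreeCenter (h : SuppressStep A B) {C : Multigraph} (hC : IsThreeCenter B.G B.X C) :
    IsThreeCenter A.G A.X C := by
  obtain ⟨⟨I, hI⟩, hmax⟩ := hC
  exact ⟨h.exists_centerCond_of_target hI,
    fun H ⟨J, hJ⟩ => hmax H (h.exists_centerCond_of_source hJ)⟩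

end SuppressStep

lemma isThreeCenter_of_reflTransGen {A M : MarkedGraph}
    (h : Relation.ReflTransGen SuppressStep A M) {C : Multigraph}
    (hC : IsThreeCenter M.G M.X C) : IsThreeCenter A.G A.X C := by
  induction h using Relation.ReflTransGen.head_induction_on with
  | refl => exact hC
  | head hstep _ ih => exact hstep.isThreeCenter ih

open Classical in
noncomputable def contractMap (G : Multigraph) {v t : G.V} (ht : t ≠ v) (x : G.V) :
    {x : G.V // x ≠ v} :=
  if hx : x = v then ⟨t, ht⟩ else ⟨x, hx⟩

noncomputable def identify (G : Multigraph) {v t : G.V} (ht : t ≠ v) : Multigraph where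
  V := {x : G.V // x ≠ v}
  E := {e : G.E // ¬ (Sym2.map (G.contractMap ht) (G.ends e)).IsDiag}
  finV := inferInstance
  finE := inferInstance
  ends e := Sym2.map (G.contractMap ht) (G.ends e)
  no_loops e := e.2

lemma suppressStep_identify (G : Multigraph) (X : Set G.V) {v t : G.V} (hv : v ∉ X)
    (hdeg : G.degree v ≤ 2) (ht : t ≠ v) (hadj : 1 ≤ G.degree v → ∃ e, G.ends e = s(v, t)) :
    SuppressStep ⟨G, X⟩ ⟨G.identify ht, G.contractMap ht '' X⟩ := by
  have hσ : ∀ x, (hx : x ≠ v) → G.contractMap ht x = ⟨x, hx⟩ := fun x hx => dif_neg hx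
  refine ⟨v, hv, hdeg, G.contractMap ht, fun x y hx hy => ?_, fun y => ⟨y.1, y.2, hσ y.1 y.2⟩,
    rfl, fun h1 => ⟨t, ht, hadj h1, ?_⟩, Equiv.refl _, fun _ => rfl⟩
  · rw [hσ x hx, hσ y hy]
    exact Subtype.mk_eq_mk
  · rw [hσ t ht]
    exact dif_pos rfl

lemma exists_isThreeCenter (G : Multigraph) (X : Set G.V) : ∃ C, IsThreeCenter G X C := by
  induction hn : Nat.card G.V using Nat.strong_induction_on generalizing G with
  | _ n ih =>
  by_cases hall : ∀ v, v ∉ X → 2 < G.degree v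
  · exact ⟨G, isThreeCenter_self hall⟩
  obtain ⟨v, hvX, hdeg⟩ : ∃ v, v ∉ X ∧ G.degree v ≤ 2 := by simpa using hall
  by_cases hsub : Subsingleton G.V
  · exact ⟨empty, isThreeCenter_empty
      (Set.eq_empty_of_forall_notMem fun x hx => hvX (Subsingleton.elim x v ▸ hx))⟩
  obtain ⟨t, ht, hadj⟩ : ∃ t, ∃ ht : t ≠ v, 1 ≤ G.degree v → ∃ e, G.ends e = s(v, t) := by
    by_cases h1 : 1 ≤ G.degree v
    · obtain ⟨t, ht, hadj⟩ := exists_neighbor h1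
      exact ⟨t, ht, fun _ => hadj⟩
    · have := not_subsingleton_iff_nontrivial.1 hsub
      obtain ⟨t, ht⟩ := exists_ne v
      exact ⟨t, ht, fun h => absurd h h1⟩
  obtain ⟨C, hC⟩ := ih _ (hn ▸ Finite.card_subtype_lt (not_not.2 rfl)) (G.identify ht) _ rfl
  exact ⟨C, (suppressStep_identify G X hvX hdeg ht hadj).isThreeCenter hC⟩

end Multigraph

open Multigraph in
/-- the 3-center of `(G, X)` exists, is unique up to isomorphism, and is
the graph obtained from `G` by repeatedly suppressing vertices outside `X` of degree
at most two. -/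
theorem threeCenter_exists_unique (G : Multigraph) (X : Set G.V) :
    (∃ C : Multigraph, IsThreeCenter G X C) ∧
    (∀ C C' : Multigraph, IsThreeCenter G X C → IsThreeCenter G X C' →
      Nonempty (Iso C C')) ∧
    (∀ M : MarkedGraph, Relation.ReflTransGen SuppressStep ⟨G, X⟩ M →
      (∀ v : M.G.V, v ∉ M.X → 2 < M.G.degree v) → IsThreeCenter G X M.G) := by
  refine ⟨exists_isThreeCenter G X, fun C C' hC hC' => ?_,
    fun M hM hM_deg => isThreeCenter_of_reflTransGen hM (isThreeCenter_self hM_deg)⟩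
  obtain ⟨I⟩ := hC'.2 C hC.1
  obtain ⟨J⟩ := hC.2 C' hC'.1
  exact nonempty_iso_of_weakImmersion I J
end
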